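/- Let D_{ω,k} be the 4×4 Dirac symbol as above and J the 4×4 matrix with J₁₃ = J₂₄ = 1, J₃₁ = J₄₂ = −1 and zeros elsewhere. Then det(D_{ω,k} − i p J − iλσ) = 0, with σ = diag(1,−1,1,−1), holds exactly when λ ∈ {±i(√(1+p²+k²)+ω), ±i(√(1+p²+k²)−ω)}. -/

import Mathlib

/-!
The matrix only couples the coordinates {1, 3} among themselves and {2, 4} among themselves,
so its determinant is the product of two 2 × 2 determinants, `(ω - iλ)² - s²` and
`(ω + iλ)² - s²` with `s² = 1 + p² + k²`. Each factor vanishes exactly when `ω ∓ iλ = ±s`.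
-/

open Complex

theorem Matrix.det_fin_four_checkerboard {R : Type*} [CommRing R] (a b c d e f g h : R) :
    !![a, 0, b, 0; 0, c, 0, d; e, 0, f, 0; 0, g, 0, h].det = (a * f - b * e) * (c * h - d * g) := by
  simp [Matrix.det_succ_row_zero, Fin.sum_univ_succ, Fin.succAbove]
  ring

theorem sub_I_mul_eq_iff (a s lam : ℂ) : a - I * lam = s ↔ lam = I * (s - a) :=
  ⟨fun h => by linear_combination I * h + lam * I_sq,
    fun h => by linear_combination -I * h + (a - s) * I_sq⟩

theorem sub_I_mul_sq_eq_sq_iff (a s lam : ℂ) :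
    (a - I * lam) ^ 2 = s ^ 2 ↔ lam = I * (s - a) ∨ lam = -(I * (s + a)) := by
  rw [sq_eq_sq_iff_eq_or_eq_neg, sub_I_mul_eq_iff, sub_I_mul_eq_iff, neg_sub_left, mul_neg,
    add_comm a s]

theorem add_I_mul_sq_eq_sq_iff (a s lam : ℂ) :
    (a + I * lam) ^ 2 = s ^ 2 ↔ lam = I * (s + a) ∨ lam = -(I * (s - a)) := by
  rw [← sub_neg_eq_add, ← mul_neg, sub_I_mul_sq_eq_sq_iff, neg_eq_iff_eq_neg, neg_eq_iff_eq_neg,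
    neg_neg, or_comm]

theorem grossNeveu_continuous_spectrum (k p ω : ℝ) (lam : ℂ) :
    Matrix.det
        !![(k : ℂ) + ω - Complex.I * lam, 0, -1 - Complex.I * p, 0;
           0, -(k : ℂ) + ω + Complex.I * lam, 0, -1 - Complex.I * p;
           -1 + Complex.I * p, 0, -(k : ℂ) + ω - Complex.I * lam, 0;
           0, -1 + Complex.I * p, 0, (k : ℂ) + ω + Complex.I * lam] = 0
      ↔ lam = Complex.I * ((Real.sqrt (1 + p ^ 2 + k ^ 2) : ℂ) + ω)
        ∨ lam = -(Complex.I * ((Real.sqrt (1 + p ^ 2 + k ^ 2) : ℂ) + ω))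
        ∨ lam = Complex.I * ((Real.sqrt (1 + p ^ 2 + k ^ 2) : ℂ) - ω)
        ∨ lam = -(Complex.I * ((Real.sqrt (1 + p ^ 2 + k ^ 2) : ℂ) - ω)) := by
  set s : ℂ := (Real.sqrt (1 + p ^ 2 + k ^ 2) : ℂ)
  have hs : s ^ 2 = 1 + (p : ℂ) ^ 2 + (k : ℂ) ^ 2 := by
    rw [← ofReal_pow, Real.sq_sqrt (by positivity)]
    push_cast
    ring
  have hoff : (-1 - I * p) * (-1 + I * p) = 1 + (p : ℂ) ^ 2 := by
    linear_combination -(p : ℂ) ^ 2 * I_sq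
  have hdet : (((k : ℂ) + ω - I * lam) * (-(k : ℂ) + ω - I * lam) - (-1 - I * p) * (-1 + I * p)) *
      ((-(k : ℂ) + ω + I * lam) * ((k : ℂ) + ω + I * lam) - (-1 - I * p) * (-1 + I * p)) =
      (((ω : ℂ) - I * lam) ^ 2 - s ^ 2) * (((ω : ℂ) + I * lam) ^ 2 - s ^ 2) := by
    rw [hoff, hs]
    ring
  rw [Matrix.det_fin_four_checkerboard, hdet, mul_eq_zero, sub_eq_zero, sub_eq_zero,
    sub_I_mul_sq_eq_sq_iff, add_I_mul_sq_eq_sq_iff]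
  tauto
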